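/- If every principal submatrix of a symmetric matrix W indexed by a maximal clique of a chordal graph G is positive semidefinite, and all specified entries of W lie on edges of G (or the diagonal), then W can be completed to a positive semidefinite matrix; conversely, if W admits a positive semidefinite completion, each such clique submatrix is positive semidefinite. -/

import Mathlib

/-!
A chordal graph has a simplicial vertex outside any given proper clique (Dirac). Indeed, if the
graph is not complete, take a minimal separator `S` of two nonadjacent vertices: it is a clique,
since shortest paths between two nonadjacent vertices of `S` through the two components would
close a cycle of length at least four without a chord. By induction each component `A` contains a
vertex simplicial in `A ∪ S`, hence in the whole graph, and the two vertices so obtained are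
nonadjacent.

Completing along a perfect elimination order, remove a simplicial vertex `v`, complete the rest
to a PSD matrix `C`, and let `K` be the clique formed by `v` and its neighbours `N`. As `W_K` is
PSD, its column `v` on `N` equals `W_N q` for some `q`, with Schur complement
`W v v - qᵀ W_N q ≥ 0`. Giving `v` the row `C q` and the diagonal entry `W v v` is the congruence
of `C` by the identity with row `v` replaced by `q`, plus a nonnegative multiple of `e_v e_vᵀ`,
so it is again PSD. Conversely, clique submatrices of a completion are principal submatrices.
-/

namespace SimpleGraph

variable {V : Type*} {G : SimpleGraph V}

def IsChordal (G : SimpleGraph V) : Prop :=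
  ∀ (v : V) (w : G.Walk v v), w.IsCycle → 4 ≤ w.length →
    ∃ a b : V, a ∈ w.support ∧ b ∈ w.support ∧ G.Adj a b ∧ s(a, b) ∉ w.edges

def IsSimplicialIn (G : SimpleGraph V) (t : Set V) (v : V) : Prop :=
  G.IsClique (G.neighborSet v ∩ t)

def ReachableWithin (G : SimpleGraph V) (X : Set V) (a b : V) : Prop :=
  ∃ p : G.Walk a b, ∀ x ∈ p.support, x ∈ X

namespace ReachableWithin

variable {X Y : Set V} {a b c : V}

theorem refl (ha : a ∈ X) : G.ReachableWithin X a a := ⟨.nil, by simpa⟩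

theorem symm (h : G.ReachableWithin X a b) : G.ReachableWithin X b a := by
  obtain ⟨p, hp⟩ := h
  exact ⟨p.reverse, by simpa using hp⟩

theorem trans (h₁ : G.ReachableWithin X a b) (h₂ : G.ReachableWithin X b c) :
    G.ReachableWithin X a c := by
  obtain ⟨p, hp⟩ := h₁
  obtain ⟨q, hq⟩ := h₂
  exact ⟨p.append q, fun x hx => (Walk.mem_support_append_iff p q).1 hx |>.elim (hp x) (hq x)⟩

theorem mono (h : G.ReachableWithin X a b) (hXY : X ⊆ Y) : G.ReachableWithin Y a b := by
  obtain ⟨p, hp⟩ := h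
  exact ⟨p, fun x hx => hXY (hp x hx)⟩

theorem left_mem (h : G.ReachableWithin X a b) : a ∈ X := by
  obtain ⟨p, hp⟩ := h
  exact hp a p.start_mem_support

theorem right_mem (h : G.ReachableWithin X a b) : b ∈ X := h.symm.left_mem

theorem trans_adj (h : G.ReachableWithin X a b) (hbc : G.Adj b c) (hc : c ∈ X) :
    G.ReachableWithin X a c :=
  h.trans ⟨hbc.toWalk, by simp [h.right_mem, hc]⟩

end ReachableWithin

theorem Adj.reachableWithin {X : Set V} {a b : V} (h : G.Adj a b) (ha : a ∈ X) (hb : b ∈ X) :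
    G.ReachableWithin X a b :=
  (ReachableWithin.refl ha).trans_adj h hb

theorem Walk.exists_adj_reachableWithin {X : Set V} {a b u : V} (p : G.Walk a b)
    (hp : ∀ z ∈ p.support, z ∈ insert u X) (hu : u ∈ p.support) (hau : a ≠ u) :
    ∃ x, G.Adj u x ∧ G.ReachableWithin X a x := by
  induction p with
  | nil => simp_all
  | @cons a a' b h p ih =>
    have ha : a ∈ X := by simpa [hau] using hp a (by simp)
    by_cases ha' : a' = u
    · subst ha'
      exact ⟨a, h.symm, .refl ha⟩
    · obtain ⟨x, hux, hx⟩ :=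
        ih (fun z hz => hp z (by simp [hz])) (by simpa [Ne.symm hau] using hu) ha'
      exact ⟨x, hux, (h.reachableWithin ha hx.left_mem).trans hx⟩

theorem ReachableWithin.exists_adj_of_insert {X : Set V} {a b u : V}
    (h : G.ReachableWithin (insert u X) a b) (hab : ¬G.ReachableWithin X a b) (hau : a ≠ u) :
    ∃ x, G.Adj u x ∧ G.ReachableWithin X a x := by
  obtain ⟨p, hp⟩ := h
  by_cases hu : u ∈ p.support
  · exact p.exists_adj_reachableWithin hp hu hau
  · exact absurd ⟨p, fun z hz => (Set.mem_insert_iff.1 (hp z hz)).resolve_left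
      (ne_of_mem_of_not_mem hz hu)⟩ hab

theorem Walk.IsPath.isCycle_append_reverse {u w : V} {p q : G.Walk u w} (hp : p.IsPath)
    (hq : q.IsPath) (hpq : ∀ x ∈ p.support, x ∈ q.support → x = u ∨ x = w) (hlen : 2 ≤ p.length) :
    (p.append q.reverse).IsCycle := by
  refine hp.isCycle_append hq.reverse (fun x hxp hxq => ?_) (Or.inl hlen)
  have hu := hp.support_nodup
  have hw := hq.reverse.support_nodup
  rw [← Walk.cons_tail_support, List.nodup_cons] at hu hw
  have hxq' : x ∈ q.support := by simpa using List.mem_of_mem_tail hxq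
  rcases hpq x (List.mem_of_mem_tail hxp) hxq' with rfl | rfl
  · exact hu.1 hxp
  · exact hw.1 hxq

variable [DecidableEq V]

theorem ReachableWithin.restrict_component {X : Set V} {a b : V} (h : G.ReachableWithin X a b) :
    G.ReachableWithin {x | G.ReachableWithin X a x} a b := by
  obtain ⟨p, hp⟩ := h
  exact ⟨p, fun x hx => ⟨p.takeUntil x hx,
    fun y hy => hp y (p.support_takeUntil_subset_support hx hy)⟩⟩

theorem Walk.exists_length_lt_of_chord {u w x y : V} (p : G.Walk u w) (hx : x ∈ p.support)
    (hy : y ∈ p.support) (hxy : G.Adj x y) (he : s(x, y) ∉ p.edges) :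
    ∃ q : G.Walk u w, q.length < p.length ∧ q.support ⊆ p.support := by
  induction p with
  | nil => simp_all
  | @cons u u' w h p ih =>
    have jump : ∀ z ∈ p.support, G.Adj u z → s(u, z) ∉ (cons h p).edges →
        ∃ q : G.Walk u w, q.length < (cons h p).length ∧ q.support ⊆ (cons h p).support := by
      intro z hz huz hne
      have hzu' : z ≠ u' := by rintro rfl; simp at hne
      refine ⟨cons huz (p.dropUntil z hz), ?_, ?_⟩
      · simpa using p.length_dropUntil_lt_length hz hzu'
      · simpa using List.cons_subset_cons _ (p.support_dropUntil_subset_support hz)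
    by_cases hxp : x ∈ p.support <;> by_cases hyp : y ∈ p.support
    · obtain ⟨q, hq, hqs⟩ := ih hxp hyp (fun h => he (by simp [h]))
      exact ⟨cons h q, by simpa using hq, by simpa using List.cons_subset_cons _ hqs⟩
    · obtain rfl : y = u := by simpa [hyp] using hy
      exact jump x hxp hxy.symm (by rwa [Sym2.eq_swap])
    · obtain rfl : x = u := by simpa [hxp] using hx
      exact jump y hyp hxy he
    · obtain rfl : x = u := by simpa [hxp] using hx
      obtain rfl : y = x := by simpa [hyp] using hy
      exact (hxy.ne rfl).elim

theorem ReachableWithin.exists_isPath_chordless {X : Set V} {u w : V}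
    (h : G.ReachableWithin X u w) :
    ∃ p : G.Walk u w, p.IsPath ∧ (∀ x ∈ p.support, x ∈ X) ∧
      ∀ x ∈ p.support, ∀ y ∈ p.support, G.Adj x y → s(x, y) ∈ p.edges := by
  classical
  have hex : ∃ n, ∃ p : G.Walk u w, (∀ x ∈ p.support, x ∈ X) ∧ p.length = n :=
    let ⟨p, hp⟩ := h; ⟨_, p, hp, rfl⟩
  obtain ⟨p, hpX, hpn⟩ := Nat.find_spec hex
  have hbyX : ∀ x ∈ p.bypass.support, x ∈ X :=
    fun x hx => hpX x (p.support_bypass_subset_support hx)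
  refine ⟨p.bypass, p.bypass_isPath, hbyX, fun x hx y hy hxy => ?_⟩
  by_contra he
  obtain ⟨q, hq, hqs⟩ := p.bypass.exists_length_lt_of_chord hx hy hxy he
  have := Nat.find_min' hex ⟨q, fun z hz => hbyX z (hqs hz), rfl⟩
  have := p.length_bypass_le_length
  omega

theorem IsChordal.adj_of_reachableWithin (hG : G.IsChordal) {A B : Set V}
    {u₁ u₂ : V} (hne : u₁ ≠ u₂) (hA : G.ReachableWithin (insert u₁ (insert u₂ A)) u₁ u₂)
    (hB : G.ReachableWithin (insert u₁ (insert u₂ B)) u₁ u₂) (hAB : Disjoint A B)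
    (hAB' : ∀ x ∈ A, ∀ y ∈ B, ¬G.Adj x y) : G.Adj u₁ u₂ := by
  by_contra hnadj
  obtain ⟨p, hp, hpA, hpc⟩ := hA.exists_isPath_chordless
  obtain ⟨q, hq, hqB, hqc⟩ := hB.exists_isPath_chordless
  have hlen : ∀ r : G.Walk u₁ u₂, 2 ≤ r.length := fun r => by
    have h0 : r.length ≠ 0 := fun h => hne (r.eq_of_length_eq_zero h)
    have h1 : r.length ≠ 1 := fun h => hnadj (r.adj_of_length_eq_one h)
    omega
  have hpA' : ∀ x ∈ p.support, x ∉ q.support → x ∈ A := fun x hx hxq => by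
    rcases hpA x hx with rfl | rfl | hxA
    exacts [absurd q.start_mem_support hxq, absurd q.end_mem_support hxq, hxA]
  have hqB' : ∀ x ∈ q.support, x ∉ p.support → x ∈ B := fun x hx hxp => by
    rcases hqB x hx with rfl | rfl | hxB
    exacts [absurd p.start_mem_support hxp, absurd p.end_mem_support hxp, hxB]
  have hcyc := hp.isCycle_append_reverse hq (fun x hxp hxq => by
    rcases hpA x hxp with rfl | rfl | hxA
    · exact Or.inl rfl
    · exact Or.inr rfl
    rcases hqB x hxq with rfl | rfl | hxB
    · exact Or.inl rfl
    · exact Or.inr rfl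
    exact (Set.disjoint_left.1 hAB hxA hxB).elim) (hlen p)
  obtain ⟨c, d, hc, hd, hcd, he⟩ := hG _ _ hcyc (by
    simpa [Walk.length_append] using Nat.add_le_add (hlen p) (hlen q))
  simp only [Walk.mem_support_append_iff, Walk.support_reverse, List.mem_reverse] at hc hd
  simp only [Walk.edges_append, Walk.edges_reverse, List.mem_append, List.mem_reverse,
    not_or] at he
  by_cases hcp : c ∈ p.support <;> by_cases hdp : d ∈ p.support
  · exact he.1 (hpc c hcp d hdp hcd)
  · by_cases hcq : c ∈ q.support
    · exact he.2 (hqc c hcq d (hd.resolve_left hdp) hcd)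
    · exact hAB' c (hpA' c hcp hcq) d (hqB' d (hd.resolve_left hdp) hdp) hcd
  · by_cases hdq : d ∈ q.support
    · exact he.2 (hqc c (hc.resolve_left hcp) d hdq hcd)
    · exact hAB' d (hpA' d hdp hdq) c (hqB' c (hc.resolve_left hcp) hcp) hcd.symm
  · exact he.2 (hqc c (hc.resolve_left hcp) d (hd.resolve_left hdp) hcd)

theorem IsChordal.adj_of_separator (hG : G.IsChordal) {X : Set V} {a b u₁ u₂ : V}
    (hab : ¬G.ReachableWithin X a b) (hne : u₁ ≠ u₂) (h₁ : G.ReachableWithin (insert u₁ X) a b)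
    (h₂ : G.ReachableWithin (insert u₂ X) a b) (ha₁ : a ≠ u₁) (ha₂ : a ≠ u₂) (hb₁ : b ≠ u₁)
    (hb₂ : b ≠ u₂) : G.Adj u₁ u₂ := by
  have hba : ¬G.ReachableWithin X b a := fun h => hab h.symm
  have path {c x₁ x₂ : V} (hx₁ : G.Adj u₁ x₁) (hx₂ : G.Adj u₂ x₂)
      (hcx₁ : G.ReachableWithin X c x₁) (hcx₂ : G.ReachableWithin X c x₂) :
      G.ReachableWithin (insert u₁ (insert u₂ {z | G.ReachableWithin X c z})) u₁ u₂ := by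
    have hsub := (Set.subset_insert u₂ {z | G.ReachableWithin X c z}).trans (Set.subset_insert u₁ _)
    refine (hx₁.reachableWithin (Set.mem_insert _ _) (hsub hcx₁)).trans
      (((hcx₁.restrict_component.symm.trans hcx₂.restrict_component).mono hsub).trans
        (hx₂.symm.reachableWithin (hsub hcx₂) (Set.mem_insert_of_mem _ (Set.mem_insert _ _))))
  obtain ⟨x₁, hx₁, hax₁⟩ := h₁.exists_adj_of_insert hab ha₁
  obtain ⟨x₂, hx₂, hax₂⟩ := h₂.exists_adj_of_insert hab ha₂
  obtain ⟨y₁, hy₁, hby₁⟩ := h₁.symm.exists_adj_of_insert hba hb₁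
  obtain ⟨y₂, hy₂, hby₂⟩ := h₂.symm.exists_adj_of_insert hba hb₂
  refine hG.adj_of_reachableWithin hne (path hx₁ hx₂ hax₁ hax₂) (path hy₁ hy₂ hby₁ hby₂)
    (Set.disjoint_left.2 fun z hza hzb => hab (hza.trans hzb.symm))
    (fun x hx y hy hxy => hab ((hx.trans_adj hxy hy.right_mem).trans hy.symm))

theorem exists_minimal_separator {t : Finset V} {a b : V} (hab : a ≠ b) (hnadj : ¬G.Adj a b) :
    ∃ S ⊆ t, a ∉ S ∧ b ∉ S ∧ ¬G.ReachableWithin (↑t \ ↑S) a b ∧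
      ∀ u ∈ S, G.ReachableWithin (↑t \ ↑(S.erase u)) a b := by
  set F : Set (Finset V) := {S | S ⊆ t ∧ a ∉ S ∧ b ∉ S ∧ ¬G.ReachableWithin (↑t \ ↑S) a b}
  have h₀ : t \ {a, b} ∈ F := by
    refine ⟨Finset.sdiff_subset, by simp, by simp, ?_⟩
    rintro ⟨_ | @⟨_, c, _, h, p⟩, hp⟩
    · exact hab rfl
    · have hc : c ∈ t ∧ (c = a ∨ c = b) := by
        simpa using hp c (List.mem_cons_of_mem _ p.start_mem_support)
      obtain rfl | rfl := hc.2
      exacts [h.ne rfl, hnadj h]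
  obtain ⟨S, ⟨hSt, haS, hbS, hsep⟩, hmin⟩ := wellFounded_lt.has_min F ⟨_, h₀⟩
  refine ⟨S, hSt, haS, hbS, hsep, fun u hu => ?_⟩
  by_contra h
  exact hmin (S.erase u) ⟨(S.erase_subset u).trans hSt, fun h' => haS (Finset.mem_of_mem_erase h'),
    fun h' => hbS (Finset.mem_of_mem_erase h'), h⟩ (Finset.erase_ssubset hu)

theorem exists_isSimplicialIn_component {t S : Finset V} {a b : V}
    (ih : ∀ t' ⊂ t, ∀ {S₀ : Set V}, G.IsClique S₀ → ¬(t' : Set V) ⊆ S₀ →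
      ∃ v ∈ t', v ∉ S₀ ∧ G.IsSimplicialIn t' v)
    (hSt : S ⊆ t) (hS : G.IsClique (S : Set V)) (ha : a ∈ t) (haS : a ∉ S) (hb : b ∈ t)
    (hbS : b ∉ S) (hab : ¬G.ReachableWithin (↑t \ ↑S) a b) :
    ∃ v, G.ReachableWithin (↑t \ ↑S) a v ∧ G.IsSimplicialIn t v := by
  classical
  set A := t.filter (G.ReachableWithin (↑t \ ↑S) a)
  have haA : a ∈ A := Finset.mem_filter.2 ⟨ha, .refl (by simp [ha, haS])⟩
  have hAS : A ∪ S ⊂ t := (Finset.ssubset_iff_of_subset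
    (Finset.union_subset (Finset.filter_subset _ _) hSt)).2 ⟨b, hb, by simp [hab, hbS]⟩
  obtain ⟨v, hv, hvS, hsimp⟩ := ih _ hAS hS (fun h => haS (h (by simp [haA])))
  have hav : G.ReachableWithin (↑t \ ↑S) a v :=
    (Finset.mem_filter.1 ((Finset.mem_union.1 hv).resolve_right hvS)).2
  refine ⟨v, hav, IsClique.subset ?_ hsimp⟩
  rintro x ⟨hvx, hxt⟩
  refine ⟨hvx, ?_⟩
  by_cases hxS : x ∈ S
  · exact Finset.mem_union_right _ hxS
  · exact Finset.mem_union_left _ (Finset.mem_filter.2 ⟨hxt, hav.trans_adj hvx ⟨hxt, hxS⟩⟩)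

theorem IsChordal.exists_isSimplicialIn_notMem (hG : G.IsChordal) (t : Finset V) {S₀ : Set V}
    (hS₀ : G.IsClique S₀) (ht : ¬(t : Set V) ⊆ S₀) : ∃ v ∈ t, v ∉ S₀ ∧ G.IsSimplicialIn t v := by
  induction t using Finset.strongInduction generalizing S₀ with | H t ih =>
  by_cases hcl : G.IsClique (t : Set V)
  · obtain ⟨v, hvt, hvS⟩ := Set.not_subset.1 ht
    exact ⟨v, hvt, hvS, hcl.subset Set.inter_subset_right⟩
  obtain ⟨a, ha, b, hb, hab, hnadj⟩ : ∃ a ∈ t, ∃ b ∈ t, a ≠ b ∧ ¬G.Adj a b := by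
    simpa [IsClique, Set.Pairwise] using hcl
  obtain ⟨S, hSt, haS, hbS, hsep, hmin⟩ := exists_minimal_separator (t := t) hab hnadj
  have hreach : ∀ u ∈ S, G.ReachableWithin (insert u (↑t \ ↑S)) a b := fun u hu =>
    (hmin u hu).mono fun x hx => by by_cases hxu : x = u <;> simp_all
  have hS : G.IsClique (S : Set V) := fun u₁ hu₁ u₂ hu₂ hne =>
    hG.adj_of_separator hsep hne (hreach u₁ hu₁) (hreach u₂ hu₂) (ne_of_mem_of_not_mem hu₁ haS).symm
      (ne_of_mem_of_not_mem hu₂ haS).symm (ne_of_mem_of_not_mem hu₁ hbS).symm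
      (ne_of_mem_of_not_mem hu₂ hbS).symm
  obtain ⟨v₁, hav₁, hv₁⟩ := exists_isSimplicialIn_component ih hSt hS ha haS hb hbS hsep
  obtain ⟨v₂, hbv₂, hv₂⟩ :=
    exists_isSimplicialIn_component ih hSt hS hb hbS ha haS (fun h => hsep h.symm)
  have hv₁t : v₁ ∈ t := hav₁.right_mem.1
  have hv₂t : v₂ ∈ t := hbv₂.right_mem.1
  by_cases hv₁S₀ : v₁ ∈ S₀
  · refine ⟨v₂, hv₂t, fun hv₂S₀ => ?_, hv₂⟩
    by_cases h : v₁ = v₂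
    · exact hsep (hav₁.trans (h ▸ hbv₂.symm))
    · exact hsep ((hav₁.trans_adj (hS₀ hv₁S₀ hv₂S₀ h) hbv₂.right_mem).trans hbv₂.symm)
  · exact ⟨v₁, hv₁t, hv₁S₀, hv₁⟩

end SimpleGraph

open Matrix

section

variable {ι : Type*} [Fintype ι]

theorem Matrix.IsSymm.mulVec_dotProduct {α : Type*} [CommSemiring α] {M : Matrix ι ι α}
    (hM : M.IsSymm) (x y : ι → α) : M *ᵥ x ⬝ᵥ y = x ⬝ᵥ M *ᵥ y := by
  rw [dotProduct_mulVec, ← mulVec_transpose, hM.eq]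

variable [DecidableEq ι]

theorem Matrix.IsHermitian.exists_mulVec_eq {M : Matrix ι ι ℝ} (hM : M.IsHermitian) {b : ι → ℝ}
    (hb : ∀ z, M *ᵥ z = 0 → b ⬝ᵥ z = 0) : ∃ p, M *ᵥ p = b := by
  have hker : WithLp.toLp 2 b ∈ (LinearMap.ker (toEuclideanLin M))ᗮ := by
    refine (Submodule.mem_orthogonal' _ _).2 fun z hz => ?_
    have hz' : M *ᵥ z.ofLp = 0 := by simpa using congrArg WithLp.ofLp (LinearMap.mem_ker.1 hz)
    simpa [PiLp.inner_apply, dotProduct, mul_comm] using hb _ hz'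
  rw [LinearMap.orthogonal_ker, ← toEuclideanLin_conjTranspose_eq_adjoint, hM.eq] at hker
  obtain ⟨p, hp⟩ := hker
  exact ⟨p.ofLp, by simpa using congrArg WithLp.ofLp hp⟩

/-- `M v v - pᵀ M p` is the Schur complement of the principal submatrix of `M` off `v`. -/
theorem Matrix.PosSemidef.exists_mulVec_eq_col {M : Matrix ι ι ℝ} (hM : M.PosSemidef) (v : ι) :
    ∃ p : ι → ℝ, p v = 0 ∧ (∀ j ≠ v, (M *ᵥ p) j = M j v) ∧ p ⬝ᵥ M *ᵥ p ≤ M v v := by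
  have hMs : M.IsSymm := isHermitian_iff_isSymm.1 hM.isHermitian
  set D : Matrix ι ι ℝ := diagonal fun i => if i = v then 0 else 1
  have hDs : D.IsSymm := isSymm_diagonal _
  have hQ : (D * M * D).PosSemidef := by
    simpa [D, diagonal_conjTranspose] using hM.conjTranspose_mul_mul_same D
  obtain ⟨p₀, hp₀⟩ := hQ.isHermitian.exists_mulVec_eq (b := D *ᵥ Mᵀ v) (by
    intro z hz
    have hMz : M *ᵥ (D *ᵥ z) = 0 := by
      rw [← hM.dotProduct_mulVec_zero_iff, star_trivial, hDs.mulVec_dotProduct, mulVec_mulVec,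
        mulVec_mulVec, hz, dotProduct_zero]
    rw [hDs.mulVec_dotProduct, hMs.eq]
    exact congrFun hMz v)
  set p := D *ᵥ p₀
  have hpv : p v = 0 := by simp [p, D, mulVec_diagonal]
  have hMp : ∀ j ≠ v, (M *ᵥ p) j = M j v := fun j hj => by
    simpa [hj, D, mulVec_diagonal, ← mulVec_mulVec] using congrFun hp₀ j
  refine ⟨p, hpv, hMp, ?_⟩
  have h₁ : p ⬝ᵥ M *ᵥ p = p ⬝ᵥ M *ᵥ Pi.single v 1 := by
    refine Finset.sum_congr rfl fun j _ => ?_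
    by_cases hj : j = v
    · simp [hj, hpv]
    · simp [hMp j hj]
  have h₂ : Pi.single v 1 ⬝ᵥ M *ᵥ p = p ⬝ᵥ M *ᵥ Pi.single v 1 := by
    rw [← hMs.mulVec_dotProduct, dotProduct_comm]
  have h₃ := hM.dotProduct_mulVec_nonneg (Pi.single v 1 - p)
  simp only [star_trivial, mulVec_sub, dotProduct_sub, sub_dotProduct] at h₃
  simp only [mulVec_single_one, single_one_dotProduct, col_apply] at h₁ h₂ h₃ ⊢
  linarith

theorem Matrix.PosSemidef.exists_mulVec_eq_col_of_submatrix {W : Matrix ι ι ℝ} {K : Finset ι}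
    (hW : (W.submatrix ((↑) : K → ι) (↑)).PosSemidef) {v : ι} (hv : v ∈ K) :
    ∃ q : ι → ℝ, (∀ i ∉ K.erase v, q i = 0) ∧ (∀ j ∈ K.erase v, (W *ᵥ q) j = W j v) ∧
      q ⬝ᵥ W *ᵥ q ≤ W v v := by
  obtain ⟨p, hpv, hWp, hpWp⟩ := hW.exists_mulVec_eq_col ⟨v, hv⟩
  set q : ι → ℝ := fun i => if h : i ∈ K then p ⟨i, h⟩ else 0
  have hdot : ∀ g : ι → ℝ, g ⬝ᵥ q = (fun k : K => g k) ⬝ᵥ p := fun g => by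
    rw [dotProduct, ← Finset.sum_subset K.subset_univ (fun i _ hi => by simp [q, hi]),
      ← Finset.sum_coe_sort K]
    simp [q, dotProduct]
  have hWq : ∀ k : K, (W *ᵥ q) k = (W.submatrix ((↑) : K → ι) (↑) *ᵥ p) k := fun k => hdot _
  refine ⟨q, fun i hi => ?_, fun j hj => ?_, ?_⟩
  · by_cases hiK : i ∈ K
    · obtain rfl : i = v := by simpa [hiK] using hi
      simpa [q, hv] using hpv
    · simp [q, hiK]
  · rw [hWq ⟨j, Finset.mem_of_mem_erase hj⟩, hWp _ (by simpa using Finset.ne_of_mem_erase hj)]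
    rfl
  · rw [dotProduct_comm, hdot]
    simpa [hWq, dotProduct_comm] using hpWp

theorem Matrix.PosSemidef.exists_posSemidef_update {C W : Matrix ι ι ℝ} (hC : C.PosSemidef)
    {K : Finset ι} {v : ι} (hv : v ∈ K) (hW : (W.submatrix ((↑) : K → ι) (↑)).PosSemidef)
    (hCW : ∀ j ∈ K.erase v, ∀ k ∈ K.erase v, C j k = W j k) :
    ∃ C' : Matrix ι ι ℝ, C'.PosSemidef ∧ (∀ i j, i ≠ v → j ≠ v → C' i j = C i j) ∧
      ∀ j ∈ K, C' v j = W v j ∧ C' j v = W j v := by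
  have hCs : C.IsSymm := isHermitian_iff_isSymm.1 hC.isHermitian
  obtain ⟨q, hq, hWq, hqWq⟩ := hW.exists_mulVec_eq_col_of_submatrix hv
  have hCq : ∀ j ∈ K.erase v, (C *ᵥ q) j = W j v := fun j hj => by
    rw [← hWq j hj]
    refine Finset.sum_congr rfl fun k _ => ?_
    by_cases hk : k ∈ K.erase v
    · simp only [hCW j hj k hk]
    · simp [hq k hk]
  have hqCq : q ⬝ᵥ C *ᵥ q ≤ W v v := by
    refine le_of_eq_of_le (Finset.sum_congr rfl fun i _ => ?_) hqWq
    by_cases hi : i ∈ K.erase v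
    · rw [hCq i hi, hWq i hi]
    · simp [hq i hi]
  set R : Matrix ι ι ℝ := updateRow 1 v q
  have hR : ∀ i, R i = if i = v then q else Pi.single i 1 := fun i => by
    split_ifs with hi
    · simp [R, hi]
    · ext k; simp [R, updateRow_ne hi, one_eq_pi_single]
  refine ⟨R * C * Rᵀ + diagonal (Pi.single v (W v v - q ⬝ᵥ C *ᵥ q)), ?_, fun i j hi hj => ?_,
    fun j hj => ?_⟩
  · refine (hC.mul_mul_conjTranspose_same R).add (PosSemidef.diagonal ?_)
    exact Pi.single_nonneg.2 (sub_nonneg.2 hqCq)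
  · simp [mul_mul_apply, hR, hi, hj, diagonal_apply]
  by_cases hjv : j = v
  · subst hjv
    simp [mul_mul_apply, hR]
  have hj' : j ∈ K.erase v := Finset.mem_erase.2 ⟨hjv, hj⟩
  have hWs : W j v = W v j := by
    simpa using (isHermitian_iff_isSymm.1 hW.isHermitian).apply ⟨v, hv⟩ ⟨j, hj⟩
  simp only [add_apply, mul_mul_apply, transpose_transpose, hR, if_pos, if_neg hjv,
    diagonal_apply_ne _ hjv, diagonal_apply_ne _ (Ne.symm hjv), add_zero]
  rw [← hCs.mulVec_dotProduct, dotProduct_single_one, single_one_dotProduct]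
  exact ⟨(hCq j hj').trans hWs, hCq j hj'⟩

theorem SimpleGraph.IsChordal.exists_posSemidef_completion {G : SimpleGraph ι} (hG : G.IsChordal)
    {W : Matrix ι ι ℝ}
    (hW : ∀ K : Finset ι, G.IsClique (K : Set ι) → (W.submatrix ((↑) : K → ι) (↑)).PosSemidef)
    (s : Finset ι) :
    ∃ C : Matrix ι ι ℝ, C.PosSemidef ∧ ∀ i ∈ s, ∀ j ∈ s, (i = j ∨ G.Adj i j) → C i j = W i j := by
  classical
  induction s using Finset.strongInduction with | H s ih =>
  rcases s.eq_empty_or_nonempty with rfl | hs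
  · exact ⟨0, .zero, by simp⟩
  obtain ⟨v, hvs, -, hv⟩ := hG.exists_isSimplicialIn_notMem s SimpleGraph.isClique_empty
    (by simpa using hs.ne_empty)
  obtain ⟨C, hC, hCW⟩ := ih _ (Finset.erase_ssubset hvs)
  set N := s.filter (G.Adj v)
  have hvN : v ∉ N := by simp [N]
  have hNs : N ⊆ s.erase v := fun x hx =>
    Finset.mem_erase.2 ⟨ne_of_mem_of_not_mem hx hvN, (Finset.mem_filter.1 hx).1⟩
  have hN : G.IsClique (N : Set ι) := hv.subset fun x hx => by simpa [N, and_comm] using hx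
  have hK : G.IsClique (↑(insert v N) : Set ι) := by
    rw [Finset.coe_insert, SimpleGraph.isClique_insert]
    exact ⟨hN, fun x hx _ => (Finset.mem_filter.1 hx).2⟩
  obtain ⟨C', hC', hC'C, hC'W⟩ := hC.exists_posSemidef_update (Finset.mem_insert_self v N)
    (hW _ hK) (by
      rw [Finset.erase_insert hvN]
      intro j hj k hk
      exact hCW j (hNs hj) k (hNs hk) (or_iff_not_imp_left.2 (hN hj hk)))
  have hmem : ∀ x ∈ s, G.Adj v x → x ∈ insert v N := fun x hx hvx =>
    Finset.mem_insert_of_mem (Finset.mem_filter.2 ⟨hx, hvx⟩)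
  refine ⟨C', hC', fun i hi j hj hij => ?_⟩
  by_cases hiv : i = v
  · subst hiv
    rcases hij with rfl | hij
    exacts [(hC'W i (Finset.mem_insert_self _ _)).1, (hC'W j (hmem j hj hij)).1]
  by_cases hjv : j = v
  · subst hjv
    exact (hC'W i (hmem i hi (hij.resolve_left hiv).symm)).2
  rw [hC'C i j hiv hjv]
  exact hCW i (Finset.mem_erase.2 ⟨hiv, hi⟩) j (Finset.mem_erase.2 ⟨hjv, hj⟩) hij

end

theorem stmt_14_general (n : ℕ) (G : SimpleGraph (Fin n))
    (hchordal : ∀ (v : Fin n) (w : G.Walk v v), w.IsCycle → 4 ≤ w.length →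
      ∃ a b : Fin n, a ∈ w.support ∧ b ∈ w.support ∧ G.Adj a b ∧ s(a, b) ∉ w.edges)
    (W : Matrix (Fin n) (Fin n) ℝ) :
    (∀ s : Finset (Fin n), G.IsClique (s : Set (Fin n)) →
        (∀ t : Finset (Fin n), G.IsClique (t : Set (Fin n)) → s ⊆ t → t = s) →
        (W.submatrix (fun i : {x // x ∈ s} => (i : Fin n))
          (fun i : {x // x ∈ s} => (i : Fin n))).PosSemidef) ↔
      ∃ W' : Matrix (Fin n) (Fin n) ℝ, W'.IsSymm ∧ W'.PosSemidef ∧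
        (∀ i, W' i i = W i i) ∧ ∀ i j, G.Adj i j → W' i j = W i j := by
  constructor
  · intro hmax
    have hW : ∀ K : Finset (Fin n), G.IsClique (K : Set (Fin n)) →
        (W.submatrix ((↑) : K → Fin n) (↑)).PosSemidef := fun K hK => by
      obtain ⟨K', hKK', hK'⟩ :=
        Finite.exists_le_maximal (p := fun K : Finset (Fin n) => G.IsClique (K : Set (Fin n))) hK
      exact (hmax K' hK'.prop fun t ht hK't => (hK'.2 ht hK't).antisymm hK't).submatrix
        (Set.inclusion hKK')
    obtain ⟨C, hC, hCW⟩ := SimpleGraph.IsChordal.exists_posSemidef_completion hchordal hW .univ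
    exact ⟨C, isHermitian_iff_isSymm.1 hC.isHermitian, hC,
      fun i => hCW i (Finset.mem_univ _) i (Finset.mem_univ _) (.inl rfl),
      fun i j h => hCW i (Finset.mem_univ _) j (Finset.mem_univ _) (.inr h)⟩
  · rintro ⟨W', -, hW', hdiag, hadj⟩ s hs -
    convert hW'.submatrix ((↑) : s → Fin n) using 1
    ext i j
    by_cases h : (i : Fin n) = j
    · simp [h, hdiag]
    · exact (hadj i j (hs i.2 j.2 h)).symm

/-- Matrix completion theorem (Grone et al.): let G be a chordal graph on n
nodes and W a symmetric partial matrix whose specified entries lie on the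
diagonal and the edges of G.  Then every principal submatrix of W indexed by a
maximal clique of G is positive semidefinite if and only if W can be completed
to a positive semidefinite matrix (a symmetric PSD matrix agreeing with W on
the diagonal and on the edges of G). -/
theorem stmt_14 (n : ℕ) (G : SimpleGraph (Fin n))
    (hchordal : ∀ (v : Fin n) (w : G.Walk v v), w.IsCycle → 4 ≤ w.length →
      ∃ a b : Fin n, a ∈ w.support ∧ b ∈ w.support ∧ G.Adj a b ∧ s(a, b) ∉ w.edges)
    (W : Matrix (Fin n) (Fin n) ℝ) (hsym : W.IsSymm) :
    (∀ s : Finset (Fin n), G.IsClique (s : Set (Fin n)) →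
        (∀ t : Finset (Fin n), G.IsClique (t : Set (Fin n)) → s ⊆ t → t = s) →
        (W.submatrix (fun i : {x // x ∈ s} => (i : Fin n))
          (fun i : {x // x ∈ s} => (i : Fin n))).PosSemidef) ↔
      ∃ W' : Matrix (Fin n) (Fin n) ℝ, W'.IsSymm ∧ W'.PosSemidef ∧
        (∀ i, W' i i = W i i) ∧ ∀ i j, G.Adj i j → W' i j = W i j :=
  stmt_14_general n G hchordal W
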